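/- arXiv:0806.2984 — 2 statements merged into one kernel-verified Lean document; each statement's English description precedes it below -/
import Mathlib

section
/- Let r, s > 0 be real numbers with rs > 1, set X = r p² + (pq + qp) + s q² and S = s^{1/2} q + s^{−1/2} p, viewed as operators on C_c^∞(ℝ,ℂ). Then for every u ∈ C_c^∞(ℝ,ℂ): ⟨u, X² u⟩ = (r − 1/s)² ⟨u, p⁴ u⟩ + 2(r − 1/s) ⟨u, p S² p u⟩ + ⟨u, S⁴ u⟩ − 2(rs − 1) ‖u‖². -/
open MeasureTheory Complex
open scoped ComplexOrder

noncomputable section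

/-- Operators acting on complex-valued functions on `ℝ`. -/
abbrev Op : Type := (ℝ → ℂ) → (ℝ → ℂ)

/-- The momentum operator `(p u)(x) = -i u'(x)`. -/
def pOp : Op := fun u x => -Complex.I * deriv u x

/-- The position operator `(q u)(x) = x * u(x)`. -/
def qOp : Op := fun u x => (x : ℂ) * u x

/-- Multiplication operator by a real-valued function. -/
def mulOp (f : ℝ → ℝ) : Op := fun u x => (f x : ℂ) * u x

/-- Commutator of two operators. -/
def opComm (A B : Op) : Op := fun u => A (B u) - B (A u)

/-- Anticommutator of two operators. -/
def opACom (A B : Op) : Op := fun u => A (B u) + B (A u)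

/-- The `L²(ℝ,ℂ)` inner product, antilinear in the first argument. -/
def ip (u v : ℝ → ℂ) : ℂ := ∫ x : ℝ, (starRingEnd ℂ) (u x) * v x

/-- `u ∈ C_c^∞(ℝ,ℂ)`: smooth and compactly supported. -/
def IsTest (u : ℝ → ℂ) : Prop := ContDiff ℝ (⊤ : ℕ∞) u ∧ HasCompactSupport u

/-- `X = r p² + (pq + qp) + s q²`. -/
def Xop (r s : ℝ) : Op := (r : ℂ) • (pOp ∘ pOp) + opACom pOp qOp + (s : ℂ) • (qOp ∘ qOp)

/-- `S = s^{1/2} q + s^{−1/2} p`. -/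
def Sop (s : ℝ) : Op := ((Real.sqrt s : ℝ) : ℂ) • qOp + (((Real.sqrt s)⁻¹ : ℝ) : ℂ) • pOp

/-!
Writing `S² = s q² + (qp + pq) + s⁻¹ p²`, one has `X = S² + a p²` with `a = r − 1/s`, hence
`X² = S⁴ + a (S² p² + p² S²) + a² p⁴`. Moreover `S² p² + p² S² = 2 p S² p + [[S², p], p]`, and the
canonical commutation relation gives `[S², p] = 2i (s q + p)`, so the double commutator is the
scalar `−2s`. This is an identity in any ring in which `[q, p] = i`; on smooth functions `p` and `q`
are linear endomorphisms satisfying it, and pairing with a compactly supported `u` is linear.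
-/

theorem mul_mul_self_add_mul_self_mul {A : Type*} [Ring A] (T p : A) :
    T * (p * p) + p * p * T = 2 • (p * T * p) + ((T * p - p * T) * p - p * (T * p - p * T)) := by
  noncomm_ring

section CanonicalCommutation

variable {A : Type*} [Ring A] [Module ℂ A] [IsScalarTower ℂ A A] [SMulCommClass ℂ A A] {p q : A}

theorem smul_add_inv_smul_mul_self (σ : ℂ) (hσ : σ ≠ 0) :
    (σ • q + σ⁻¹ • p) * (σ • q + σ⁻¹ • p) =
      σ ^ 2 • (q * q) + (q * p + p * q) + (σ ^ 2)⁻¹ • (p * p) := by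
  simp only [add_mul, mul_add, smul_mul_smul_comm]
  match_scalars <;> field_simp

theorem smul_add_smul_mul_sub_mul (hqp : q * p - p * q = I • 1) (a b : ℂ) :
    (a • q + b • p) * p - p * (a • q + b • p) = (a * I) • 1 := by
  rw [← smul_smul, ← hqp]
  simp only [add_mul, mul_add, smul_mul_assoc, mul_smul_comm]
  module

theorem quadratic_mul_sub_mul (hqp : q * p - p * q = I • 1) (a b : ℂ) :
    (a • (q * q) + (q * p + p * q) + b • (p * p)) * p
        - p * (a • (q * q) + (q * p + p * q) + b • (p * p))
      = (2 * I * a) • q + (2 * I) • p := by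
  have hleibniz : (a • (q * q) + (q * p + p * q) + b • (p * p)) * p
        - p * (a • (q * q) + (q * p + p * q) + b • (p * p))
      = a • (q * (q * p - p * q) + (q * p - p * q) * q)
        + ((q * p - p * q) * p + p * (q * p - p * q)) := by
    simp only [add_mul, mul_add, smul_mul_assoc, mul_smul_comm, mul_sub, sub_mul, smul_add,
      smul_sub, ← mul_assoc]
    abel
  rw [hleibniz, hqp]
  simp only [mul_smul_comm, smul_mul_assoc, mul_one, one_mul]
  module

theorem mul_self_eq_of_mul_sub_mul_eq_I (hqp : q * p - p * q = I • 1) (r : ℂ) {σ : ℂ}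
    (hσ : σ ≠ 0) :
    (r • (p * p) + (p * q + q * p) + σ ^ 2 • (q * q))
        * (r • (p * p) + (p * q + q * p) + σ ^ 2 • (q * q)) =
      (r - (σ ^ 2)⁻¹) ^ 2 • (p * p * p * p)
        + (2 * (r - (σ ^ 2)⁻¹)) • (p * (σ • q + σ⁻¹ • p) * (σ • q + σ⁻¹ • p) * p)
        + (σ • q + σ⁻¹ • p) * (σ • q + σ⁻¹ • p) * (σ • q + σ⁻¹ • p) * (σ • q + σ⁻¹ • p)
        - (2 * (r * σ ^ 2 - 1)) • 1 := by
  set S := σ • q + σ⁻¹ • p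
  set a := r - (σ ^ 2)⁻¹
  have hS : S * S = σ ^ 2 • (q * q) + (q * p + p * q) + (σ ^ 2)⁻¹ • (p * p) :=
    smul_add_inv_smul_mul_self σ hσ
  have hX : r • (p * p) + (p * q + q * p) + σ ^ 2 • (q * q) = S * S + a • (p * p) := by
    rw [hS]; module
  have hSp : S * S * p - p * (S * S) = (2 * I * σ ^ 2) • q + (2 * I) • p := by
    rw [hS]; exact quadratic_mul_sub_mul hqp _ _
  have hσ2 : σ ^ 2 * (σ ^ 2)⁻¹ = 1 := mul_inv_cancel₀ (pow_ne_zero 2 hσ)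
  rw [hX]
  calc (S * S + a • (p * p)) * (S * S + a • (p * p))
      = a ^ 2 • (p * p * p * p) + a • (S * S * (p * p) + p * p * (S * S)) + S * S * (S * S) := by
        simp only [add_mul, mul_add, smul_mul_assoc, mul_smul_comm, mul_assoc]
        module
    _ = a ^ 2 • (p * p * p * p) + (2 * a) • (p * S * S * p) + S * S * S * S
          - (2 * (r * σ ^ 2 - 1)) • 1 := by
        rw [mul_mul_self_add_mul_self_mul, hSp, smul_add_smul_mul_sub_mul hqp]
        simp only [mul_assoc]
        match_scalars
        · ring
        · ring
        · simp only [a]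
          linear_combination 2 * (r - (σ ^ 2)⁻¹) * σ ^ 2 * I_sq + 2 * hσ2
        · ring

end CanonicalCommutation

def smoothFun : Submodule ℂ (ℝ → ℂ) where
  carrier := {f | ContDiff ℝ (⊤ : ℕ∞) f}
  add_mem' hf hg := by simp only [Set.mem_ofPred_eq] at *; exact hf.add hg
  zero_mem' := by simp only [Set.mem_ofPred_eq]; exact contDiff_const
  smul_mem' c _ hf := by simp only [Set.mem_ofPred_eq] at *; exact hf.const_smul c

theorem mem_smoothFun {f : ℝ → ℂ} : f ∈ smoothFun ↔ ContDiff ℝ (⊤ : ℕ∞) f := Iff.rfl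

theorem differentiable_of_mem_smoothFun (u : smoothFun) : Differentiable ℝ (u : ℝ → ℂ) :=
  (mem_smoothFun.mp u.2).differentiable (by simp)

theorem deriv_mem_smoothFun (u : smoothFun) : deriv (u : ℝ → ℂ) ∈ smoothFun :=
  (contDiff_infty_iff_deriv.mp u.2).2

def momentum : Module.End ℂ smoothFun where
  toFun u := ⟨pOp u, contDiff_const.mul (mem_smoothFun.mp (deriv_mem_smoothFun u))⟩
  map_add' u v := by
    ext x
    simp [pOp, deriv_add (differentiable_of_mem_smoothFun u x)
      (differentiable_of_mem_smoothFun v x)]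
    ring
  map_smul' c u := by
    ext x
    simp [pOp, deriv_const_smul c (differentiable_of_mem_smoothFun u x)]
    ring

def position : Module.End ℂ smoothFun where
  toFun u := ⟨qOp u, ofRealCLM.contDiff.mul (mem_smoothFun.mp u.2)⟩
  map_add' u v := by ext x; simp [qOp]; ring
  map_smul' c u := by ext x; simp [qOp]; ring

theorem position_mul_sub_momentum_mul : position * momentum - momentum * position = I • 1 := by
  ext u x
  have hqu : HasDerivAt (qOp u) (1 * (u : ℝ → ℂ) x + x * deriv u x) x :=
    (hasDerivAt_id x).ofReal_comp.mul (differentiable_of_mem_smoothFun u x).hasDerivAt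
  simp [position, momentum, pOp, qOp, hqu.deriv]
  ring

theorem integrable_conj_mul {u v : ℝ → ℂ} (hu : IsTest u) (hv : Continuous v) :
    Integrable (fun x => starRingEnd ℂ (u x) * v x) :=
  ((continuous_star.comp hu.1.continuous).mul hv).integrable_of_hasCompactSupport
    (hu.2.comp_left (g := starRingEnd ℂ) (map_zero _)).mul_right

def ipLinear (u : ℝ → ℂ) (hu : IsTest u) : smoothFun →ₗ[ℂ] ℂ where
  toFun v := ip u v
  map_add' v w := by
    simp only [ip, Submodule.coe_add, Pi.add_apply, mul_add]
    exact integral_add (integrable_conj_mul hu (mem_smoothFun.mp v.2).continuous)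
      (integrable_conj_mul hu (mem_smoothFun.mp w.2).continuous)
  map_smul' c v := by
    simp only [ip, Submodule.coe_smul, Pi.smul_apply, smul_eq_mul, mul_left_comm _ c,
      integral_const_mul, RingHom.id_apply]

theorem ip_coe_eq_ipLinear {u : ℝ → ℂ} (hu : IsTest u) (v : smoothFun) :
    ip u v = ipLinear u hu v := rfl

theorem X_sq_identity_S_general (r s : ℝ) (hs : 0 < s)
    (u : ℝ → ℂ) (hu : IsTest u) :
    ip u (Xop r s (Xop r s u)) =
      ((r - 1/s : ℝ) : ℂ)^2 * ip u (pOp (pOp (pOp (pOp u))))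
      + 2 * ((r - 1/s : ℝ) : ℂ) * ip u (pOp (Sop s (Sop s (pOp u))))
      + ip u (Sop s (Sop s (Sop s (Sop s u))))
      - 2 * ((r*s - 1 : ℝ) : ℂ) * ip u u := by
  set U : smoothFun := ⟨u, hu.1⟩
  set σ : ℂ := ((√s : ℝ) : ℂ)
  set P := momentum
  set Q := position
  have hσ : σ ≠ 0 := ofReal_ne_zero.mpr (Real.sqrt_pos.mpr hs).ne'
  have hσs : σ ^ 2 = s := by rw [← ofReal_pow, Real.sq_sqrt hs.le]
  have hX : Xop r s (Xop r s u) = ↑((((r : ℂ) • (P * P) + (P * Q + Q * P) + σ ^ 2 • (Q * Q)) *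
      ((r : ℂ) • (P * P) + (P * Q + Q * P) + σ ^ 2 • (Q * Q))) U) := by
    rw [hσs]; rfl
  have hS4 : Sop s (Sop s (Sop s (Sop s u))) = ↑(((σ • Q + σ⁻¹ • P) * (σ • Q + σ⁻¹ • P) *
      (σ • Q + σ⁻¹ • P) * (σ • Q + σ⁻¹ • P)) U) := by
    rw [← ofReal_inv]; rfl
  have hPS2P : pOp (Sop s (Sop s (pOp u))) =
      ↑((P * (σ • Q + σ⁻¹ • P) * (σ • Q + σ⁻¹ • P) * P) U) := by
    rw [← ofReal_inv]; rfl
  have hP4 : pOp (pOp (pOp (pOp u))) = ↑((P * P * P * P) U) := rfl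
  have hU : ip u u = ipLinear u hu U := rfl
  have ha : ((r - 1 / s : ℝ) : ℂ) = r - (σ ^ 2)⁻¹ := by rw [hσs]; push_cast; ring
  have hb : ((r * s - 1 : ℝ) : ℂ) = r * σ ^ 2 - 1 := by rw [hσs]; push_cast; ring
  rw [hX, hS4, hPS2P, hP4,
    mul_self_eq_of_mul_sub_mul_eq_I (p := P) (q := Q) position_mul_sub_momentum_mul _ hσ]
  simp only [ip_coe_eq_ipLinear hu, hU, ha, hb, LinearMap.sub_apply, LinearMap.add_apply,
    LinearMap.smul_apply, Module.End.one_apply, map_add, map_sub, map_smul, smul_eq_mul]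

/-- `⟨u, X² u⟩ = (r − 1/s)² ⟨u, p⁴ u⟩ + 2(r − 1/s) ⟨u, p S² p u⟩ + ⟨u, S⁴ u⟩ − 2(rs − 1) ‖u‖²`. -/
theorem X_sq_identity_S (r s : ℝ) (hr : 0 < r) (hs : 0 < s) (hrs : 1 < r * s)
    (u : ℝ → ℂ) (hu : IsTest u) :
    ip u (Xop r s (Xop r s u)) =
      ((r - 1/s : ℝ) : ℂ)^2 * ip u (pOp (pOp (pOp (pOp u))))
      + 2 * ((r - 1/s : ℝ) : ℂ) * ip u (pOp (Sop s (Sop s (pOp u))))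
      + ip u (Sop s (Sop s (Sop s (Sop s u))))
      - 2 * ((r*s - 1 : ℝ) : ℂ) * ip u u :=
  X_sq_identity_S_general r s hs u hu
end
end

section
/- Let r, s > 0 be real numbers. Then for every u ∈ C_c^∞(ℝ,ℂ): ⟨u, (r p² + s q²)² u⟩ ≥ (min{r,s})² ⟨u, (p² + q²)² u⟩ − 2( rs − (min{r,s})² ) ‖u‖², and ⟨u, (r p² + s q²)² u⟩ ≤ (max{r,s})² ⟨u, (p² + q²)² u⟩ + 2( (max{r,s})² − rs ) ‖u‖². -/
open MeasureTheory Complex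
open scoped ComplexOrder

noncomputable section

/-- `r p² + s q²`. -/
def Yop (r s : ℝ) : Op := fun v => (r : ℂ) • pOp (pOp v) + (s : ℂ) • qOp (qOp v)

/-- `p² + q²`. -/
def Nop : Op := fun v => pOp (pOp v) + qOp (qOp v)

/-! Both `p²` and `q²` are symmetric on test functions, so
`⟨u, (rp² + sq²)² u⟩ = r²‖p²u‖² + s²‖q²u‖² + 2rs Re⟨p²u, q²u⟩`,
and commuting one `p` past `q²` with `[q, p] = i` gives
`Re⟨p²u, q²u⟩ = ‖qpu‖² - ‖u‖²`.
Both sides of each bound are thus values of `r²a + s²b + 2rs(t - n)` with `a, b, t ≥ 0`,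
and the bounds reduce to `min{r,s}² ≤ r², s², rs ≤ max{r,s}²`. -/

open ComplexConjugate

def l2NormSq (u : ℝ → ℂ) : ℝ := ∫ x : ℝ, normSq (u x)

lemma l2NormSq_nonneg (u : ℝ → ℂ) : 0 ≤ l2NormSq u :=
  integral_nonneg fun x => normSq_nonneg (u x)

lemma ip_self (u : ℝ → ℂ) : ip u u = l2NormSq u := by
  rw [ip, l2NormSq, ← integral_complex_ofReal]
  simp only [normSq_eq_conj_mul_self]

lemma ip_conj_symm (u v : ℝ → ℂ) : conj (ip v u) = ip u v := by
  simp only [ip, ← integral_conj, map_mul, conj_conj, mul_comm]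

lemma ip_smul_right (u f : ℝ → ℂ) (c : ℂ) : ip u (c • f) = c * ip u f := by
  simp only [ip, ← integral_const_mul, Pi.smul_apply, smul_eq_mul, mul_left_comm]

namespace IsTest

variable {u v : ℝ → ℂ}

lemma continuous (hu : IsTest u) : Continuous u := hu.1.continuous

lemma differentiable (hu : IsTest u) : Differentiable ℝ u := hu.1.differentiable (by simp)

lemma deriv (hu : IsTest u) : IsTest (deriv u) :=
  ⟨(contDiff_infty_iff_deriv.mp hu.1).2, hu.2.deriv⟩

lemma pOp (hu : IsTest u) : IsTest (pOp u) :=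
  ⟨contDiff_const.mul hu.deriv.1, hu.deriv.2.mul_left⟩

lemma qOp (hu : IsTest u) : IsTest (qOp u) :=
  ⟨ofRealCLM.contDiff.mul hu.1, hu.2.mul_left⟩

lemma integrable_conj_mul {f : ℝ → ℂ} (hu : IsTest u) (hf : Continuous f) :
    Integrable fun x => conj (u x) * f x :=
  ((continuous_conj.comp hu.continuous).mul hf).integrable_of_hasCompactSupport
    (hu.2.comp_left (map_zero _)).mul_right

lemma add (hu : IsTest u) (hv : IsTest v) : IsTest (u + v) :=
  ⟨hu.1.add hv.1, hu.2.add hv.2⟩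

lemma const_smul (hu : IsTest u) (c : ℂ) : IsTest (c • u) :=
  ⟨hu.1.const_smul c, hu.2.smul_left⟩

lemma Yop (hu : IsTest u) (r s : ℝ) : IsTest (Yop r s u) :=
  (hu.pOp.pOp.const_smul _).add (hu.qOp.qOp.const_smul _)

end IsTest

section Linearity

variable {u f g : ℝ → ℂ}

lemma ip_add_right (hu : IsTest u) (hf : Continuous f) (hg : Continuous g) :
    ip u (f + g) = ip u f + ip u g := by
  simp only [ip, Pi.add_apply, mul_add]
  exact integral_add (hu.integrable_conj_mul hf) (hu.integrable_conj_mul hg)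

lemma ip_sub_right (hu : IsTest u) (hf : Continuous f) (hg : Continuous g) :
    ip u (f - g) = ip u f - ip u g := by
  simp only [ip, Pi.sub_apply, mul_sub]
  exact integral_sub (hu.integrable_conj_mul hf) (hu.integrable_conj_mul hg)

end Linearity

lemma ip_qOp_left (u v : ℝ → ℂ) : ip (qOp u) v = ip u (qOp v) := by
  simp only [ip, qOp, map_mul, conj_ofReal, mul_assoc, mul_left_comm]

lemma ip_pOp_left {u v : ℝ → ℂ} (hu : IsTest u) (hv : IsTest v) :
    ip (pOp u) v = ip u (pOp v) := by
  have parts : ∫ x, conj (u x) * deriv v x = -∫ x, conj (deriv u x) * v x :=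
    integral_mul_deriv_eq_deriv_mul_of_integrable
      (fun x _ => (hu.differentiable x).hasDerivAt.star)
      (fun x _ => (hv.differentiable x).hasDerivAt)
      (hu.integrable_conj_mul hv.deriv.continuous)
      (hu.deriv.integrable_conj_mul hv.continuous)
      (hu.integrable_conj_mul hv.continuous)
  have hpu : ip (pOp u) v = I * ∫ x, conj (deriv u x) * v x := by
    simp only [ip, pOp, ← integral_const_mul, map_mul, map_neg, conj_I, neg_neg, mul_assoc]
  have hpv : ip u (pOp v) = -I * ∫ x, conj (u x) * deriv v x := by
    simp only [ip, pOp, ← integral_const_mul, mul_left_comm]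
  rw [hpu, hpv, parts]
  ring

lemma opComm_qOp_pOp {v : ℝ → ℂ} (hv : Differentiable ℝ v) :
    opComm qOp pOp v = I • v := by
  funext x
  have hqv : HasDerivAt (qOp v) (1 * v x + x * deriv v x) x :=
    (by simpa using (hasDerivAt_id x).ofReal_comp : HasDerivAt (fun y : ℝ => (y : ℂ)) 1 x).mul
      (hv x).hasDerivAt
  simp only [opComm, qOp, pOp, hqv.deriv, Pi.sub_apply, Pi.smul_apply, smul_eq_mul]
  ring

lemma pOp_qOp {v : ℝ → ℂ} (hv : Differentiable ℝ v) :
    pOp (qOp v) = qOp (pOp v) - I • v := by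
  rw [← opComm_qOp_pOp hv, opComm, sub_sub_cancel]

section

variable {u : ℝ → ℂ}

lemma pOp_qOp_qOp (hu : IsTest u) :
    pOp (qOp (qOp u)) = qOp (qOp (pOp u)) - (2 * I) • qOp u := by
  funext x
  have h₁ := congrFun (pOp_qOp hu.qOp.differentiable) x
  have h₂ := congrFun (pOp_qOp hu.differentiable) x
  simp only [qOp, Pi.sub_apply, Pi.smul_apply, smul_eq_mul] at h₁ h₂ ⊢
  rw [h₁, h₂]
  ring

/-- `⟨pu, qu⟩ - ⟨qu, pu⟩ = ⟨u, [p, q] u⟩ = -i ‖u‖²`. -/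
lemma im_ip_pOp_qOp (hu : IsTest u) : (ip (pOp u) (qOp u)).im = -l2NormSq u / 2 := by
  have hz : ip (pOp u) (qOp u) - conj (ip (pOp u) (qOp u)) = ((-l2NormSq u : ℝ) : ℂ) * I := by
    have hzu : ip (pOp u) (qOp u) = ip u (qOp (pOp u)) - I * l2NormSq u := by
      rw [ip_pOp_left hu hu.qOp, pOp_qOp hu.differentiable,
        ip_sub_right hu hu.pOp.qOp.continuous (hu.const_smul _).continuous,
        ip_smul_right, ip_self]
    rw [ip_conj_symm, ip_qOp_left, hzu]
    push_cast
    ring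
  rw [sub_conj] at hz
  have := ofReal_injective (mul_right_cancel₀ I_ne_zero hz)
  linarith

lemma re_ip_pOp_sq_qOp_sq (hu : IsTest u) :
    (ip (pOp (pOp u)) (qOp (qOp u))).re = l2NormSq (qOp (pOp u)) - l2NormSq u := by
  rw [ip_pOp_left hu.pOp hu.qOp.qOp, pOp_qOp_qOp hu,
    ip_sub_right hu.pOp hu.pOp.qOp.qOp.continuous (hu.qOp.const_smul _).continuous,
    ip_smul_right, ← ip_qOp_left, ip_self]
  simp only [sub_re, ofReal_re, mul_re, mul_im, re_ofNat, im_ofNat, I_re, I_im, im_ip_pOp_qOp hu]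
  ring

lemma ip_Yop_right {w : ℝ → ℂ} (hu : IsTest u) (hw : IsTest w) (r s : ℝ) :
    ip u (Yop r s w) = r * ip (pOp (pOp u)) w + s * ip (qOp (qOp u)) w := by
  rw [Yop, ip_add_right hu (hw.pOp.pOp.const_smul _).continuous
      (hw.qOp.qOp.const_smul _).continuous,
    ip_smul_right, ip_smul_right, ← ip_pOp_left hu hw.pOp, ← ip_pOp_left hu.pOp hw,
    ← ip_qOp_left, ← ip_qOp_left]

lemma ip_Yop_Yop (hu : IsTest u) (r s : ℝ) :
    ip u (Yop r s (Yop r s u)) = ((r ^ 2 * l2NormSq (pOp (pOp u)) + s ^ 2 * l2NormSq (qOp (qOp u))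
      + 2 * r * s * (l2NormSq (qOp (pOp u)) - l2NormSq u) : ℝ) : ℂ) := by
  have hA := hu.pOp.pOp
  have hB := hu.qOp.qOp
  have hcross : ip (pOp (pOp u)) (qOp (qOp u)) + ip (qOp (qOp u)) (pOp (pOp u))
      = ((2 * (l2NormSq (qOp (pOp u)) - l2NormSq u) : ℝ) : ℂ) := by
    rw [← ip_conj_symm (qOp (qOp u)), add_conj, re_ip_pOp_sq_qOp_sq hu]
  rw [ip_Yop_right hu (hu.Yop r s), Yop,
    ip_add_right hA (hA.const_smul _).continuous (hB.const_smul _).continuous,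
    ip_add_right hB (hA.const_smul _).continuous (hB.const_smul _).continuous,
    ip_smul_right, ip_smul_right, ip_smul_right, ip_smul_right, ip_self, ip_self]
  push_cast at hcross ⊢
  linear_combination (r : ℂ) * s * hcross

end

lemma Nop_eq_Yop_one_one : Nop = Yop 1 1 := by
  funext v x
  simp [Nop, Yop]

lemma sub_le_sq_mul_add_sq_mul {c r s a b t n : ℝ} (hcr : c ≤ r ^ 2) (hcs : c ≤ s ^ 2)
    (hcrs : c ≤ r * s) (ha : 0 ≤ a) (hb : 0 ≤ b) (ht : 0 ≤ t) :
    c * (a + b + 2 * (t - n)) - 2 * (r * s - c) * n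
      ≤ r ^ 2 * a + s ^ 2 * b + 2 * r * s * (t - n) := by
  nlinarith [mul_nonneg (sub_nonneg.2 hcr) ha, mul_nonneg (sub_nonneg.2 hcs) hb,
    mul_nonneg (sub_nonneg.2 hcrs) ht]

lemma sq_mul_add_sq_mul_le_add {C r s a b t n : ℝ} (hrC : r ^ 2 ≤ C) (hsC : s ^ 2 ≤ C)
    (hrsC : r * s ≤ C) (ha : 0 ≤ a) (hb : 0 ≤ b) (ht : 0 ≤ t) :
    r ^ 2 * a + s ^ 2 * b + 2 * r * s * (t - n)
      ≤ C * (a + b + 2 * (t - n)) + 2 * (C - r * s) * n := by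
  nlinarith [mul_nonneg (sub_nonneg.2 hrC) ha, mul_nonneg (sub_nonneg.2 hsC) hb,
    mul_nonneg (sub_nonneg.2 hrsC) ht]

/-- for all `r, s > 0`,
`(min{r,s})² ⟨u,(p²+q²)² u⟩ − 2(rs − (min{r,s})²)‖u‖² ≤ ⟨u,(rp²+sq²)² u⟩`
and `⟨u,(rp²+sq²)² u⟩ ≤ (max{r,s})² ⟨u,(p²+q²)² u⟩ + 2((max{r,s})² − rs)‖u‖²`. -/
theorem rp2_sq2_squared_bounds (r s : ℝ) (hr : 0 < r) (hs : 0 < s)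
    (u : ℝ → ℂ) (hu : IsTest u) :
    (((min r s)^2 : ℝ) : ℂ) * ip u (Nop (Nop u))
        - 2 * ((r*s - (min r s)^2 : ℝ) : ℂ) * ip u u
      ≤ ip u (Yop r s (Yop r s u))
    ∧ ip u (Yop r s (Yop r s u))
      ≤ (((max r s)^2 : ℝ) : ℂ) * ip u (Nop (Nop u))
        + 2 * (((max r s)^2 - r*s : ℝ) : ℂ) * ip u u := by
  have ha := l2NormSq_nonneg (pOp (pOp u))
  have hb := l2NormSq_nonneg (qOp (qOp u))
  have ht := l2NormSq_nonneg (qOp (pOp u))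
  have hm : 0 ≤ min r s := le_min hr.le hs.le
  rw [Nop_eq_Yop_one_one, ip_Yop_Yop hu, ip_Yop_Yop hu, ip_self]
  simp only [one_pow, one_mul, mul_one]
  constructor
  · exact_mod_cast sub_le_sq_mul_add_sq_mul (n := l2NormSq u)
      (pow_le_pow_left₀ hm (min_le_left r s) 2) (pow_le_pow_left₀ hm (min_le_right r s) 2)
      (by nlinarith [min_le_left r s, min_le_right r s]) ha hb ht
  · exact_mod_cast sq_mul_add_sq_mul_le_add (n := l2NormSq u)
      (pow_le_pow_left₀ hr.le (le_max_left r s) 2) (pow_le_pow_left₀ hs.le (le_max_right r s) 2)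
      (by nlinarith [le_max_left r s, le_max_right r s]) ha hb ht
end
end
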